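/- arXiv:1506.06166 — 4 statements merged into one kernel-verified Lean document; each statement's English description precedes it below -/
import Mathlib

section
/- Soundness of LP-Unif for multisets of queries: if Φ ⊢ {A1,...,An} ⇝*_γ ∅, i.e. the multiset {A1,...,An} reduces to the empty multiset by unification (LP-Unif) reductions with final accumulated substitution γ, then for each i there exists a proof term e_i such that e_i : ∀x̄. ⇒ γA_i is derivable from the axioms Φ in the Horn-formulas-as-types system. -/
namespace SRes

/-- First-order terms: variables and function symbols applied to lists of terms. -/
inductive Tm : Type where
  | var : ℕ → Tm
  | fn : ℕ → List Tm → Tm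

/-- First-order substitutions. -/
abbrev Subst := ℕ → Tm

/-- Applying a substitution to a term. -/
def Tm.subst (σ : Subst) : Tm → Tm
  | .var x => σ x
  | .fn f ts => .fn f (ts.attach.map (fun t => Tm.subst σ t.1))
decreasing_by
  have := List.sizeOf_lt_of_mem t.2
  simp only [Tm.fn.sizeOf_spec]
  omega

/-- The identity substitution. -/
def Subst.id : Subst := Tm.var

/-- Composition of substitutions: `(Subst.comp θ γ) x = θ(γ(x))`. -/
def Subst.comp (θ γ : Subst) : Subst := fun x => (γ x).subst θ

/-- Free variables of a term. -/
def Tm.fv : Tm → Finset ℕ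
  | .var x => {x}
  | .fn _ ts => (ts.attach.map (fun t => Tm.fv t.1)).foldr (· ∪ ·) ∅
decreasing_by
  have := List.sizeOf_lt_of_mem t.2
  simp only [Tm.fn.sizeOf_spec]
  omega

/-- Function symbols occurring in a term. -/
def Tm.fns : Tm → Finset ℕ
  | .var _ => ∅
  | .fn f ts => insert f ((ts.attach.map (fun t => Tm.fns t.1)).foldr (· ∪ ·) ∅)
decreasing_by
  have := List.sizeOf_lt_of_mem t.2
  simp only [Tm.fn.sizeOf_spec]
  omega

/-- Atomic formulas `P(t1,...,tn)`. -/
structure Atom : Type where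
  pred : ℕ
  args : List Tm

def Atom.subst (σ : Subst) (A : Atom) : Atom := ⟨A.pred, A.args.map (Tm.subst σ)⟩

def Atom.fv (A : Atom) : Finset ℕ := (A.args.map Tm.fv).foldr (· ∪ ·) ∅

def Atom.fns (A : Atom) : Finset ℕ := (A.args.map Tm.fns).foldr (· ∪ ·) ∅

/-- Renaming the variables of an atom. -/
def Atom.rename (ρ : ℕ → ℕ) (A : Atom) : Atom := A.subst (fun x => .var (ρ x))

/-- `A.ext t'` is `A[t']`: add `t'` as an extra last argument of `A`. -/
def Atom.ext (A : Atom) (t : Tm) : Atom := ⟨A.pred, A.args ++ [t]⟩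

def listFV (As : List Atom) : Finset ℕ := (As.map Atom.fv).foldr (· ∪ ·) ∅

def listFns (As : List Atom) : Finset ℕ := (As.map Atom.fns).foldr (· ∪ ·) ∅

/-- Free variables of a multiset of atoms. -/
def mFV (G : Multiset Atom) : Finset ℕ := (G.map Atom.fv).sup

/-- A logic program: a finite list of axioms `κ : ∀x̄. body ⇒ head`
(each axiom is implicitly universally closed). -/
abbrev Prog := List (ℕ × List Atom × Atom)

def progFns (Φ : Prog) : Finset ℕ :=
  (Φ.map (fun r => r.2.2.fns ∪ listFns r.2.1)).foldr (· ∪ ·) ∅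

/-! ### Proof terms (de Bruijn representation for bound proof variables) -/

inductive Pf : Type where
  | const : ℕ → Pf           -- proof-term constants κ
  | bvar : ℕ → Pf            -- proof-term variables a (de Bruijn)
  | lam : Pf → Pf            -- λa.e
  | app : Pf → Pf → Pf       -- e e'

/-- Lift de Bruijn indices `≥ c` by `d`. -/
def Pf.lift (c d : ℕ) : Pf → Pf
  | .const k => .const k
  | .bvar i => if i < c then .bvar i else .bvar (i + d)
  | .lam p => .lam (p.lift (c+1) d)
  | .app p q => .app (p.lift c d) (q.lift c d)

/-- Substitute `q` for de Bruijn index `k` in a proof term. -/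
def Pf.subst (k : ℕ) (q : Pf) : Pf → Pf
  | .const c => .const c
  | .bvar i => if i < k then .bvar i else if i = k then q.lift 0 k else .bvar (i - 1)
  | .lam p => .lam (Pf.subst (k+1) q p)
  | .app p p' => .app (Pf.subst k q p) (Pf.subst k q p')

/-- Beta-reduction on proof terms: congruence closure of `(λa.p) p' →β [p'/a]p`. -/
inductive Beta : Pf → Pf → Prop where
  | beta (p q : Pf) : Beta (.app (.lam p) q) (p.subst 0 q)
  | appL {p p' q : Pf} : Beta p p' → Beta (.app p q) (.app p' q)
  | appR {p q q' : Pf} : Beta q q' → Beta (.app p q) (.app p q')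
  | lam {p p' : Pf} : Beta p p' → Beta (.lam p) (.lam p')

/-- A proof term is strongly normalizing if every β-reduction sequence from it is finite. -/
def Pf.SN (p : Pf) : Prop := Acc (fun a b => Beta b a) p

/-- β-normal proof terms. -/
def Pf.Normal (p : Pf) : Prop := ∀ q, ¬ Beta p q

/-- First-order proof terms: built from constants and variables by application only. -/
inductive Pf.FirstOrder : Pf → Prop where
  | const (κ : ℕ) : Pf.FirstOrder (.const κ)
  | bvar (a : ℕ) : Pf.FirstOrder (.bvar a)
  | app {p q : Pf} : Pf.FirstOrder p → Pf.FirstOrder q → Pf.FirstOrder (.app p q)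

/-- `Pf.lams k p` is `λa1...λak. p`. -/
def Pf.lams : ℕ → Pf → Pf
  | 0, p => p
  | n+1, p => .lam (Pf.lams n p)

/-- Apply a proof term to a list of proof terms, left associated. -/
def Pf.apps (p : Pf) : List Pf → Pf
  | [] => p
  | q :: qs => Pf.apps (.app p q) qs

/-- The proof term `λā.λb̄.(e2 b̄)(e1 ā)` produced by the cut rule
(`n` is the length of `ā`, `m` the length of `b̄`). -/
def cutTerm (n m : ℕ) (e₁ e₂ : Pf) : Pf :=
  Pf.lams (n + m) <|
    .app (Pf.apps (e₂.lift 0 (n+m)) ((List.range m).map (fun j => Pf.bvar (m - 1 - j))))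
         (Pf.apps (e₁.lift 0 (n+m)) ((List.range n).map (fun j => Pf.bvar (n + m - 1 - j))))

/-! ### Horn formulas as types -/

/-- Horn formulas `A1,...,An ⇒ B`, either unquantified (`horn`)
or universally closed over all their free term variables (`all`). -/
inductive Formula : Type where
  | horn : List Atom → Atom → Formula
  | all : List Atom → Atom → Formula

/-- The Horn-formulas-as-types typing judgment `e : F` relative to a program `Φ`. -/
inductive Derives (Φ : Prog) : Pf → Formula → Prop where
  | ax {κ : ℕ} {body : List Atom} {head : Atom} :
      (κ, body, head) ∈ Φ → Derives Φ (.const κ) (.all body head)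
  | gen {e : Pf} {body : List Atom} {head : Atom} :
      Derives Φ e (.horn body head) → Derives Φ e (.all body head)
  | inst {e : Pf} {body : List Atom} {head : Atom} (σ : Subst) :
      Derives Φ e (.all body head) →
      Derives Φ e (.horn (body.map (Atom.subst σ)) (head.subst σ))
  | cut {e₁ e₂ : Pf} {As Bs : List Atom} {D C : Atom} :
      Derives Φ e₁ (.horn As D) → Derives Φ e₂ (.horn (Bs ++ [D]) C) →
      Derives Φ (cutTerm As.length Bs.length e₁ e₂) (.horn (As ++ Bs) C)

/-! ### Reductions -/

def Unifies (γ : Subst) (A B : Atom) : Prop := A.subst γ = B.subst γ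

/-- `γ` is a most general unifier of `A` and `B`. -/
def IsMGU (γ : Subst) (A B : Atom) : Prop :=
  Unifies γ A B ∧ ∀ δ, Unifies δ A B → ∃ θ, δ = Subst.comp θ γ

/-- `(body, head)` is a freshly renamed copy of the axiom `κ` of `Φ`,
whose variables do not occur in the goal multiset `G`. -/
def FreshRuleFor (Φ : Prog) (κ : ℕ) (G : Multiset Atom)
    (body : List Atom) (head : Atom) : Prop :=
  ∃ (body₀ : List Atom) (head₀ : Atom) (ρ : ℕ → ℕ),
    (κ, body₀, head₀) ∈ Φ ∧ Function.Injective ρ ∧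
    body = body₀.map (Atom.rename ρ) ∧ head = head₀.rename ρ ∧
    Disjoint (listFV body ∪ head.fv) (mFV G)

/-- Term-matching (LP-TM) reduction step via axiom `κ`:
replace `Ai = σC` by `σB1,...,σBm`. -/
def TMStep (Φ : Prog) (κ : ℕ) (G G' : Multiset Atom) : Prop :=
  ∃ (body : List Atom) (head : Atom) (σ : Subst) (rest : Multiset Atom),
    (κ, body, head) ∈ Φ ∧ G = (head.subst σ) ::ₘ rest ∧
    G' = ↑(body.map (Atom.subst σ)) + rest

def TMred (Φ : Prog) (G G' : Multiset Atom) : Prop := ∃ κ, TMStep Φ κ G G'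

/-- `G` is in term-matching normal form. -/
def TMNF (Φ : Prog) (G : Multiset Atom) : Prop := ∀ G', ¬ TMred Φ G G'

/-- `Φ` is productive: every term-matching reduction sequence is finite. -/
def Productive (Φ : Prog) : Prop := ∀ G, Acc (fun a b => TMred Φ b a) G

/-- Unification (LP-Unif) reduction step via axiom `κ` with most general unifier `γ`. -/
def UnifStepL (Φ : Prog) (κ : ℕ) (γ : Subst) (G G' : Multiset Atom) : Prop :=
  ∃ (A : Atom) (rest : Multiset Atom) (body : List Atom) (head : Atom),
    G = A ::ₘ rest ∧ FreshRuleFor Φ κ G body head ∧ IsMGU γ head A ∧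
    G' = ↑(body.map (Atom.subst γ)) + rest.map (Atom.subst γ)

/-- Substitutional reduction step via axiom `κ` with most general unifier `γ`. -/
def SubStepL (Φ : Prog) (κ : ℕ) (γ : Subst) (G G' : Multiset Atom) : Prop :=
  ∃ (A : Atom) (rest : Multiset Atom) (body : List Atom) (head : Atom),
    G = A ::ₘ rest ∧ FreshRuleFor Φ κ G body head ∧ IsMGU γ head A ∧
    G' = G.map (Atom.subst γ)

/-- Stateful LP-Unif reduction on pairs (goal multiset, accumulated substitution). -/
def unifR (Φ : Prog) (p q : Multiset Atom × Subst) : Prop :=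
  ∃ κ γ, UnifStepL Φ κ γ p.1 q.1 ∧ q.2 = Subst.comp γ p.2

/-- Stateful LP-Struct reduction `→^μ·↪^1`: term-matching reduce to `→`-normal form,
then perform at most one substitutional step. -/
def structR (Φ : Prog) (p q : Multiset Atom × Subst) : Prop :=
  ∃ G', Relation.ReflTransGen (TMred Φ) p.1 G' ∧ TMNF Φ G' ∧
    ((q.1 = G' ∧ q.2 = p.2) ∨ ∃ κ γ, SubStepL Φ κ γ G' q.1 ∧ q.2 = Subst.comp γ p.2)

/-- A multiset of queries succeeds by LP-Unif reduction. -/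
def UnifSucc (Φ : Prog) (G : Multiset Atom) : Prop :=
  ∃ γ, Relation.ReflTransGen (unifR Φ) (G, Subst.id) (0, γ)

/-- A multiset of queries succeeds by LP-Struct reduction. -/
def StructSucc (Φ : Prog) (G : Multiset Atom) : Prop :=
  ∃ γ, Relation.ReflTransGen (structR Φ) (G, Subst.id) (0, γ)

/-- `Φ` is non-overlapping: heads of distinct axioms have no common instance. -/
def NonOverlapping (Φ : Prog) : Prop :=
  ∀ κ body head κ' body' head', (κ, body, head) ∈ Φ → (κ', body', head') ∈ Φ → κ ≠ κ' →
    ∀ σ δ : Subst, head.subst σ ≠ head'.subst δ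

/-! ### Realizability transformation -/

def ruleFV (body : List Atom) (head : Atom) : Finset ℕ := listFV body ∪ head.fv

/-- `extBody [A1,...,Am] [y1,...,ym] = [A1[y1],...,Am[ym]]`. -/
def extBody (As : List Atom) (ys : List ℕ) : List Atom :=
  List.zipWith (fun A y => A.ext (Tm.var y)) As ys

/-- Realizability transformation of a single axiom `κ : ∀x̄. A1,...,Am ⇒ B`
into `κ : ∀x̄∀ȳ. A1[y1],...,Am[ym] ⇒ B[f_κ(y1,...,ym)]` with fresh distinct `ȳ`. -/
def transRule (fsym : ℕ → ℕ) (κ : ℕ) (body : List Atom) (head : Atom) : List Atom × Atom :=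
  let N := (ruleFV body head).sup id + 1
  let ys := (List.range body.length).map (fun i => N + i)
  (extBody body ys, head.ext (.fn (fsym κ) (ys.map Tm.var)))

/-- The realizability transformation `F(Φ)`. -/
def transProg (fsym : ℕ → ℕ) (Φ : Prog) : Prog :=
  Φ.map (fun r => (r.1, transRule fsym r.1 r.2.1 r.2.2))

/-- `fsym` assigns a fresh function symbol `f_κ` to each proof-term constant `κ`. -/
def FreshSyms (fsym : ℕ → ℕ) (Φ : Prog) : Prop :=
  Function.Injective fsym ∧ ∀ κ, fsym κ ∉ progFns Φ

/-- The representation `⟦·⟧_φ` of first-order normal proof terms as first-order terms: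
`⟦a⟧_φ = φ(a)` and `⟦κ p1 ... pn⟧_φ = f_κ(⟦p1⟧_φ,...,⟦pn⟧_φ)`. -/
inductive PfRep (fsym : ℕ → ℕ) (φ : ℕ → Tm) : Pf → Tm → Prop where
  | bvar (a : ℕ) : PfRep fsym φ (.bvar a) (φ a)
  | app (κ : ℕ) (ps : List Pf) (ts : List Tm) (hlen : ps.length = ts.length)
      (h : ∀ pt ∈ ps.zip ts, PfRep fsym φ pt.1 pt.2) :
      PfRep fsym φ (Pf.apps (.const κ) ps) (.fn (fsym κ) ts)

/-- The map `[ȳ/ā]` sending the bound proof variables `a1,...,ak` (de Bruijn) of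
`λa1...ak.n` to the first-order variables `y1,...,yk`. -/
def mkPhi (ys : List ℕ) : ℕ → Tm := fun j => Tm.var (ys.getD (ys.length - 1 - j) 0)

theorem Tm.subst_id (t : Tm) : t.subst Subst.id = t := by
  match t with
  | .var x => simp [Tm.subst, Subst.id]
  | .fn f ts =>
    rw [Tm.subst]
    congr 1
    have : ts.attach.map (fun t => Tm.subst Subst.id t.1)
        = ts.attach.map (fun t => t.1) := by
      apply List.map_congr_left
      intro a _
      exact Tm.subst_id a.1
    rw [this]; simp
decreasing_by
  have := List.sizeOf_lt_of_mem a.2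
  simp only [Tm.fn.sizeOf_spec]
  omega

theorem List.attach_map_fn {α β : Type*} (l : List α) (g : α → β) :
    l.attach.map (fun t => g t.1) = l.map g := by
  rw [show (fun t : {x // x ∈ l} => g t.1) = g ∘ Subtype.val from rfl,
    ← List.map_map]
  simp

theorem Tm.subst_comp (θ γ : Subst) (t : Tm) :
    (t.subst γ).subst θ = t.subst (Subst.comp θ γ) := by
  match t with
  | .var x => simp [Tm.subst, Subst.comp]
  | .fn f ts =>
    rw [Tm.subst, Tm.subst, Tm.subst]
    congr 1
    rw [List.attach_map_fn, List.attach_map_fn, List.attach_map_fn, List.map_map]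
    apply List.map_congr_left
    intro a ha
    exact Tm.subst_comp θ γ a
decreasing_by
  have := List.sizeOf_lt_of_mem ha
  simp only [Tm.fn.sizeOf_spec]
  omega

theorem Atom.subst_comp (θ γ : Subst) (A : Atom) :
    (A.subst γ).subst θ = A.subst (Subst.comp θ γ) := by
  simp [Atom.subst, List.map_map, Function.comp_def, Tm.subst_comp]

/-- Discharging a list of hypotheses by repeated cuts. -/
theorem discharge (Φ : Prog) (Bs : List Atom) :
    ∀ (C : Atom) (e : Pf), Derives Φ e (.horn Bs C) →
    (∀ B ∈ Bs, ∃ e', Derives Φ e' (.horn [] B)) →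
    ∃ e'', Derives Φ e'' (.horn [] C) := by
  induction Bs using List.reverseRecOn with
  | nil => intro C e h _; exact ⟨e, h⟩
  | append_singleton Bs D ih =>
    intro C e h hB
    obtain ⟨e₁, h₁⟩ := hB D (by simp)
    have hcut := Derives.cut h₁ h
    exact ih C _ hcut (fun B hBmem => hB B (by simp [hBmem]))

theorem lp_unif_key (Φ : Prog) (p : Multiset Atom × Subst) (γf : Subst)
    (h : Relation.ReflTransGen (unifR Φ) p (0, γf)) :
    ∃ θ : Subst, (∀ x, γf x = (p.2 x).subst θ) ∧
      ∀ A ∈ p.1, ∃ e, Derives Φ e (.horn [] (A.subst θ)) := by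
  induction h using Relation.ReflTransGen.head_induction_on with
  | refl =>
    refine ⟨Subst.id, fun x => (Tm.subst_id _).symm, ?_⟩
    simp
  | @head a c step _ ih =>
    obtain ⟨κ, γ₁, hstep, hcomp⟩ := step
    obtain ⟨A, rest, body, head, hG, hfresh, hmgu, hG'⟩ := hstep
    obtain ⟨θ', hθ1, hθ2⟩ := ih
    refine ⟨Subst.comp θ' γ₁, ?_, ?_⟩
    · intro x
      rw [hθ1 x, hcomp]
      simp [Subst.comp, Tm.subst_comp]
    · intro A' hA'
      rw [hG, Multiset.mem_cons] at hA'
      rcases hA' with rfl | hA'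
      · -- the selected atom
        obtain ⟨body₀, head₀, ρ, hmem, _, hbody, hhead, _⟩ := hfresh
        have hax : Derives Φ (.const κ) (.all body₀ head₀) := Derives.ax hmem
        set σs : Subst := Subst.comp (Subst.comp θ' γ₁) (fun x => .var (ρ x)) with hσs
        have hinst := Derives.inst σs hax
        have hren : head₀.subst (fun x => .var (ρ x)) = head := by
          rw [hhead]; rfl
        have hhead' : head₀.subst σs = A'.subst (Subst.comp θ' γ₁) := by
          rw [hσs, ← Atom.subst_comp, hren, ← Atom.subst_comp,
            show Atom.subst γ₁ head = Atom.subst γ₁ A' from hmgu.1,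
            Atom.subst_comp]
        have hbodyder : ∀ B ∈ body₀.map (Atom.subst σs),
            ∃ e', Derives Φ e' (.horn [] B) := by
          intro B hB
          rw [List.mem_map] at hB
          obtain ⟨B₀, hB₀, rfl⟩ := hB
          have hmem' : (B₀.subst (fun x => .var (ρ x))).subst γ₁ ∈ c.1 := by
            rw [hG']
            apply Multiset.mem_add.mpr
            left
            rw [Multiset.mem_coe, hbody]
            simp only [List.map_map]
            exact List.mem_map.mpr ⟨B₀, hB₀, rfl⟩
          obtain ⟨e, he⟩ := hθ2 _ hmem'
          refine ⟨e, ?_⟩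
          rwa [Atom.subst_comp, Atom.subst_comp] at he
        obtain ⟨e'', he''⟩ := discharge Φ _ _ _ hinst hbodyder
        rw [hhead'] at he''
        exact ⟨e'', he''⟩
      · -- an atom from the rest
        have hmem' : A'.subst γ₁ ∈ c.1 := by
          rw [hG']
          exact Multiset.mem_add.mpr (Or.inr (Multiset.mem_map.mpr ⟨A', hA', rfl⟩))
        obtain ⟨e, he⟩ := hθ2 _ hmem'
        rw [Atom.subst_comp] at he
        exact ⟨e, he⟩

/-- Soundness of LP-Unif for multisets of queries:
if `Φ ⊢ {A1,...,An} ⇝*_γ ∅`, then for each `Ai` there is a proof term `ei` with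
`ei : ∀x̄. ⇒ γAi` derivable from `Φ`. -/
theorem lp_unif_sound_multiset (Φ : Prog) (G : Multiset Atom) (γ : Subst)
    (h : Relation.ReflTransGen (unifR Φ) (G, Subst.id) (0, γ)) :
    ∀ A ∈ G, ∃ e : Pf, Derives Φ e (.all [] (A.subst γ)) := by
  obtain ⟨θ, hθ1, hθ2⟩ := lp_unif_key Φ (G, Subst.id) γ h
  have hγθ : γ = θ := by
    funext x
    simpa [Subst.id, Tm.subst] using hθ1 x
  intro A hA
  obtain ⟨e, he⟩ := hθ2 A hA
  exact ⟨e, Derives.gen (hγθ ▸ he)⟩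

end SRes
end

section
/- If e : [∀x̄.] ⇒ B is derivable from axioms Φ (a proof of a Horn formula with empty body), then e is β-normalizable to a first-order proof term, i.e. a proof term built from proof-term constants and variables by application only. -/
namespace SRes

/-! By induction on the derivation, a derivable proof term of a formula with
`k` body atoms reduces to a first-order term or to `λa₁…aₖ.n` with `n` first order. In a cut,
the two premises are applied to bound variables, which consumes their abstractions, and the
remaining single abstraction of the second premise is then applied to the first-order
reduct of the first. Beta-reduction is not stable under lifting, so the induction
is carried out for all iterated lifts of the derived term at once. -/

local notation:50 p:51 " →β* " q:51 => Relation.ReflTransGen Beta p q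

namespace Pf

theorem lift_lift_of_le (q : Pf) {c₁ c₂ : ℕ} (k d : ℕ) (h : c₁ ≤ c₂) :
    (q.lift c₁ k).lift (c₂ + k) d = (q.lift c₂ d).lift c₁ k := by
  induction q generalizing c₁ c₂ with
  | const => rfl
  | bvar i =>
    simp only [Pf.lift]
    split_ifs <;> simp only [Pf.lift] <;> split_ifs <;> simp only [Pf.bvar.injEq] <;> omega
  | lam p ih =>
    simp only [Pf.lift, Pf.lam.injEq]
    rw [show c₂ + k + 1 = (c₂ + 1) + k by omega]
    exact ih (by omega)
  | app p q ihp ihq =>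
    simp only [Pf.lift, Pf.app.injEq]
    exact ⟨ihp h, ihq h⟩

@[simp]
theorem lift_zero (p : Pf) (c : ℕ) : p.lift c 0 = p := by
  induction p generalizing c with
  | const => rfl
  | bvar i => simp [Pf.lift]
  | lam p ih => simp [Pf.lift, ih]
  | app p q ihp ihq => simp [Pf.lift, ihp, ihq]

theorem lams_lift (k c d : ℕ) (p : Pf) :
    (Pf.lams k p).lift c d = Pf.lams k (p.lift (c + k) d) := by
  induction k generalizing c with
  | zero => rfl
  | succ n ih =>
    simp only [Pf.lams, Pf.lift, ih, Pf.lam.injEq]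
    rw [Nat.add_right_comm, Nat.add_assoc]

theorem apps_lift (qs : List Pf) (p : Pf) (c d : ℕ) :
    (Pf.apps p qs).lift c d = Pf.apps (p.lift c d) (qs.map (Pf.lift c d)) := by
  induction qs generalizing p with
  | nil => rfl
  | cons q qs ih => exact ih _

theorem FirstOrder.lift {p : Pf} (h : p.FirstOrder) (c d : ℕ) : (p.lift c d).FirstOrder := by
  induction h generalizing c with
  | const κ => exact .const κ
  | bvar a =>
    simp only [Pf.lift]
    split_ifs <;> exact .bvar _
  | app _ _ ihp ihq => exact .app (ihp c) (ihq c)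

theorem FirstOrder.subst {p q : Pf} (hp : p.FirstOrder) (hq : q.FirstOrder) (k : ℕ) :
    (Pf.subst k q p).FirstOrder := by
  induction hp generalizing k with
  | const κ => exact .const κ
  | bvar a =>
    simp only [Pf.subst]
    split_ifs
    · exact .bvar _
    · exact hq.lift 0 k
    · exact .bvar _
  | app _ _ ihp ihq => exact .app (ihp k) (ihq k)

theorem FirstOrder.apps {p : Pf} (h : p.FirstOrder) {qs : List Pf}
    (hqs : ∀ q ∈ qs, q.FirstOrder) : (Pf.apps p qs).FirstOrder := by
  induction qs generalizing p with
  | nil => exact h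
  | cons q qs ih => exact ih (.app h (hqs q (by simp))) (fun q hq => hqs q (by simp [hq]))

def LamsFirstOrder (k : ℕ) (n : Pf) : Prop :=
  n.FirstOrder ∨ ∃ m, n = Pf.lams k m ∧ m.FirstOrder

theorem lamsFirstOrder_zero_iff {n : Pf} : LamsFirstOrder 0 n ↔ n.FirstOrder := by
  simp [LamsFirstOrder, Pf.lams]

def LiftsTo : Pf → Pf → Prop := Relation.ReflTransGen fun p q => ∃ c d, q = p.lift c d

theorem LiftsTo.lift {p q : Pf} (h : p.LiftsTo q) (c d : ℕ) : p.LiftsTo (q.lift c d) :=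
  Relation.ReflTransGen.tail h ⟨c, d, rfl⟩

theorem LiftsTo.eq_const {κ : ℕ} {q : Pf} (h : (Pf.const κ).LiftsTo q) : q = .const κ := by
  induction h with
  | refl => rfl
  | tail _ hstep ih =>
    obtain ⟨c, d, rfl⟩ := hstep
    rw [ih]
    rfl

end Pf

theorem betaStar_app {p p' q q' : Pf} (hp : p →β* p') (hq : q →β* q') :
    .app p q →β* .app p' q' :=
  (hp.lift (Pf.app · q) fun _ _ => Beta.appL).trans (hq.lift (Pf.app p') fun _ _ => Beta.appR)

theorem betaStar_lams (k : ℕ) {p p' : Pf} (h : p →β* p') : Pf.lams k p →β* Pf.lams k p' := by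
  induction k with
  | zero => exact h
  | succ n ih => exact ih.lift Pf.lam fun _ _ => Beta.lam

theorem betaStar_apps {p p' : Pf} (qs : List Pf) (h : p →β* p') :
    Pf.apps p qs →β* Pf.apps p' qs := by
  induction qs generalizing p p' with
  | nil => exact h
  | cons q qs ih => exact ih (betaStar_app h .refl)

/-- `Beta.beta p q` reduces to `p.subst 0 q`, which is `Pf.subst 0 p q`: the body `p` is
substituted for index `0` in the argument `q`. -/
theorem Beta.app_lam_bvar (p : Pf) (i : ℕ) :
    Beta (.app (.lam p) (.bvar i)) (if i = 0 then p else .bvar (i - 1)) := by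
  convert Beta.beta p (.bvar i) using 1
  by_cases hi : i = 0 <;> simp [Pf.subst, hi]

namespace Pf.LamsFirstOrder

theorem apps_bvars {j : ℕ} {qs : List Pf} (hqs : ∀ q ∈ qs, ∃ i, q = .bvar i) {n : Pf}
    (hn : LamsFirstOrder (qs.length + j) n) :
    ∃ r, Pf.apps n qs →β* r ∧ LamsFirstOrder j r := by
  induction qs generalizing n with
  | nil => exact ⟨n, .refl, by simpa using hn⟩
  | cons q qs ih =>
    obtain ⟨i, rfl⟩ := hqs q (by simp)
    have hbvars : ∀ q ∈ qs, ∃ i, q = .bvar i := fun q hq => hqs q (by simp [hq])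
    rcases hn with hfo | ⟨p, rfl, hp⟩
    · refine ⟨_, .refl, Or.inl (hfo.apps fun q hq => ?_)⟩
      obtain ⟨i, rfl⟩ := hqs q hq
      exact .bvar i
    · have hstep := Beta.app_lam_bvar (Pf.lams (qs.length + j) p) i
      have hreduct : LamsFirstOrder (qs.length + j)
          (if i = 0 then Pf.lams (qs.length + j) p else .bvar (i - 1)) := by
        split_ifs
        · exact Or.inr ⟨p, rfl, hp⟩
        · exact Or.inl (.bvar _)
      obtain ⟨r, hr, hgood⟩ := ih hbvars hreduct
      refine ⟨r, .trans (betaStar_apps qs (.single ?_)) hr, hgood⟩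
      simpa [Nat.add_right_comm, Pf.lams] using hstep

theorem app {m n : Pf} (hm : LamsFirstOrder 1 m) (hn : n.FirstOrder) :
    ∃ r, .app m n →β* r ∧ r.FirstOrder := by
  rcases hm with hm | ⟨p, rfl, hp⟩
  · exact ⟨_, .refl, .app hm hn⟩
  · exact ⟨_, .single (Beta.beta p n), hn.subst hp 0⟩

end Pf.LamsFirstOrder

theorem cutTerm_lift (n m : ℕ) (e₁ e₂ : Pf) (c d : ℕ) :
    (cutTerm n m e₁ e₂).lift c d = cutTerm n m (e₁.lift c d) (e₂.lift c d) := by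
  have lift_bvar_lt (i : ℕ) (hi : i < c + (n + m)) : (Pf.bvar i).lift (c + (n + m)) d = .bvar i :=
    if_pos hi
  have lift_lift (e : Pf) :
      (e.lift 0 (n + m)).lift (c + (n + m)) d = (e.lift c d).lift 0 (n + m) :=
    e.lift_lift_of_le (n + m) d (Nat.zero_le c)
  simp only [cutTerm, Pf.lams_lift, Pf.lift, Pf.apps_lift, lift_lift, List.map_map]
  congr 3 <;> apply List.map_congr_left <;> intro j hj <;>
    simp only [List.mem_range] at hj <;> exact lift_bvar_lt _ (by omega)

theorem Pf.LiftsTo.cutTerm {n m : ℕ} {e₁ e₂ q : Pf} (h : (cutTerm n m e₁ e₂).LiftsTo q) :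
    ∃ e₁' e₂', e₁.LiftsTo e₁' ∧ e₂.LiftsTo e₂' ∧ q = cutTerm n m e₁' e₂' := by
  induction h with
  | refl => exact ⟨e₁, e₂, .refl, .refl, rfl⟩
  | tail _ hstep ih =>
    obtain ⟨c, d, rfl⟩ := hstep
    obtain ⟨e₁', e₂', h₁, h₂, rfl⟩ := ih
    exact ⟨_, _, h₁.lift c d, h₂.lift c d, cutTerm_lift n m e₁' e₂' c d⟩

def Formula.body : Formula → List Atom
  | .horn body _ => body
  | .all body _ => body

theorem Derives.exists_reduct_lamsFirstOrder {Φ : Prog} {e : Pf} {F : Formula}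
    (h : Derives Φ e F) (e' : Pf) (he' : e.LiftsTo e') :
    ∃ n, e' →β* n ∧ n.LamsFirstOrder F.body.length := by
  induction h generalizing e' with
  | ax _ => exact ⟨e', .refl, Or.inl (he'.eq_const ▸ .const _)⟩
  | gen _ ih => exact ih e' he'
  | inst σ _ ih => simpa [Formula.body] using ih e' he'
  | @cut e₁ e₂ As Bs D C _ _ ih₁ ih₂ =>
    obtain ⟨e₁', e₂', h₁, h₂, rfl⟩ := he'.cutTerm
    set K := As.length + Bs.length
    obtain ⟨n₁, hr₁, hn₁⟩ := ih₁ _ (h₁.lift 0 K)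
    obtain ⟨n₂, hr₂, hn₂⟩ := ih₂ _ (h₂.lift 0 K)
    simp only [Formula.body, List.length_append, List.length_singleton] at hn₁ hn₂ ⊢
    have hbvars (f : ℕ → ℕ) (l : ℕ) :
        ∀ q ∈ (List.range l).map (fun j => Pf.bvar (f j)), ∃ i, q = .bvar i := by
      simp
    obtain ⟨a₁, hra₁, ha₁⟩ := Pf.LamsFirstOrder.apps_bvars (j := 0) (hbvars _ As.length)
      (by simpa using hn₁)
    obtain ⟨a₂, hra₂, ha₂⟩ := Pf.LamsFirstOrder.apps_bvars (j := 1) (hbvars _ Bs.length)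
      (by simpa using hn₂)
    obtain ⟨r, hr, hfo⟩ := ha₂.app (Pf.lamsFirstOrder_zero_iff.mp ha₁)
    refine ⟨Pf.lams K r, betaStar_lams K ?_, Or.inr ⟨r, rfl, hfo⟩⟩
    exact (betaStar_app ((betaStar_apps _ hr₂).trans hra₂)
      ((betaStar_apps _ hr₁).trans hra₁)).trans hr

/-- If `e : [∀x̄.] ⇒ B` is derivable from `Φ`, then `e` β-normalizes to
a first-order proof term. -/
theorem empty_body_first_order (Φ : Prog) (e : Pf) (head : Atom)
    (h : Derives Φ e (.horn [] head) ∨ Derives Φ e (.all [] head)) :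
    ∃ n : Pf, Relation.ReflTransGen Beta e n ∧ n.FirstOrder := by
  obtain ⟨F, hF, hbody⟩ : ∃ F, Derives Φ e F ∧ F.body = [] := by
    rcases h with h | h
    exacts [⟨_, h, rfl⟩, ⟨_, h, rfl⟩]
  obtain ⟨n, hr, hn⟩ := hF.exists_reduct_lamsFirstOrder e .refl
  rw [hbody] at hn
  exact ⟨n, hr, Pf.lamsFirstOrder_zero_iff.mp hn⟩

end SRes
end

section
/- The realizability transformation yields productive programs: for any logic program Φ, the term-matching (→) reduction relation of the transformed program F(Φ) is strongly normalizing, i.e. every term-matching reduction sequence from any multiset of atomic formulas under F(Φ) is finite. -/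
namespace SRes

/-! Auxiliary material for the productivity proof. -/

/-- Size of a term. -/
def tsize : Tm → ℕ
  | .var _ => 1
  | .fn _ ts => 1 + (ts.attach.map (fun t => tsize t.1)).sum
decreasing_by
  have := List.sizeOf_lt_of_mem t.2
  simp only [Tm.fn.sizeOf_spec]
  omega

lemma Tm.subst_var (σ : Subst) (x : ℕ) : Tm.subst σ (.var x) = σ x := by simp [Tm.subst]

lemma Tm.subst_fn (σ : Subst) (f : ℕ) (ts : List Tm) :
    Tm.subst σ (.fn f ts) = .fn f (ts.map (Tm.subst σ)) := by
  rw [Tm.subst]; simp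

lemma tsize_fn (f : ℕ) (ts : List Tm) : tsize (.fn f ts) = 1 + (ts.map tsize).sum := by
  rw [tsize]; simp

/-- Weight of an atom: size of its last argument, 0 if none. -/
def weight (A : Atom) : ℕ := (A.args.getLast?).elim 0 tsize

/-- Measure of a goal multiset. -/
def meas (G : Multiset Atom) : ℕ := (G.map weight).sum

lemma weight_ext_subst (A : Atom) (t : Tm) (σ : Subst) :
    weight ((A.ext t).subst σ) = tsize (t.subst σ) := by
  simp [Atom.ext, Atom.subst, weight, List.getLast?_concat]

lemma zipWith_sum_le {α β : Type*} (g : β → ℕ) :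
    ∀ (as : List α) (bs : List β), (List.zipWith (fun _ b => g b) as bs).sum ≤ (bs.map g).sum
  | [], _ => by simp
  | _ :: _, [] => by simp
  | a :: as, b :: bs => by
      simpa using Nat.add_le_add_left (zipWith_sum_le g as bs) (g b)

lemma meas_key (body : List Atom) (ys : List ℕ) (head : Atom) (f : ℕ) (σ : Subst)
    (rest : Multiset Atom) :
    meas (↑((extBody body ys).map (Atom.subst σ)) + rest)
      < meas (((head.ext (.fn f (ys.map Tm.var))).subst σ) ::ₘ rest) := by
  have h1 : meas (((head.ext (.fn f (ys.map Tm.var))).subst σ) ::ₘ rest)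
      = (1 + (ys.map (fun y => tsize (σ y))).sum) + meas rest := by
    simp [meas, weight_ext_subst, Tm.subst_fn, tsize_fn, List.map_map,
      Function.comp_def, Tm.subst_var]
  have h2 : meas (↑((extBody body ys).map (Atom.subst σ)) + rest)
      = (List.zipWith (fun (_ : Atom) y => tsize (σ y)) body ys).sum + meas rest := by
    have key : ∀ (bs : List Atom) (zs : List ℕ),
        ((extBody bs zs).map (Atom.subst σ)).map weight
          = List.zipWith (fun (_ : Atom) y => tsize (σ y)) bs zs := by
      intro bs
      induction bs with
      | nil => intro zs; simp [extBody]
      | cons b bs ih =>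
          intro zs
          cases zs with
          | nil => simp [extBody]
          | cons z zs =>
              simp only [extBody, List.zipWith_cons_cons, List.map_cons,
                weight_ext_subst, Tm.subst_var]
              congr 1
              simpa [extBody, List.map_map] using ih zs
    simp [meas, Multiset.map_coe, key]
  rw [h1, h2]
  have := zipWith_sum_le (fun y => tsize (σ y)) body ys
  omega

lemma meas_lt {fsym : ℕ → ℕ} {Φ : Prog} {G G' : Multiset Atom}
    (h : TMred (transProg fsym Φ) G G') : meas G' < meas G := by
  obtain ⟨κ, body', head', σ, rest, hmem, hG, hG'⟩ := h
  simp only [transProg, List.mem_map] at hmem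
  obtain ⟨⟨κ₀, body₀, head₀⟩, hr, heq⟩ := hmem
  simp only [transRule, Prod.mk.injEq] at heq
  obtain ⟨hκ, hbody, hhead⟩ := heq
  rw [hG, hG', ← hbody, ← hhead]
  exact meas_key _ _ _ _ _ _

/-- The realizability transformation yields productive programs:
term-matching reduction under `F(Φ)` is strongly normalizing. -/
theorem trans_productive (fsym : ℕ → ℕ) (Φ : Prog) (hf : FreshSyms fsym Φ) :
    Productive (transProg fsym Φ) := by
  intro G
  exact Subrelation.wf (fun h => meas_lt h)
    (InvImage.wf meas Nat.lt_wfRel.wf) |>.apply G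

end SRes
end

section
/- Realizability preserves LP-Unif success for queries: for a fresh variable y, Φ ⊢ {A} ⇝* ∅ if and only if F(Φ) ⊢ {A[y]} ⇝* ∅, i.e. a query A succeeds by unification reduction under Φ exactly when the extended query A[y] succeeds under the transformed program F(Φ). -/
namespace SRes

/-!
Both sides are characterised by provability: a query `B` succeeds by LP-Unif reduction iff
some instance of `B` is provable, i.e. is the root of a tree of instances of axioms. Soundness
composes the unifiers along a successful reduction; completeness lifts a term-matching proof of
an instance to a unification reduction, using fresh renamings and the existence of most general
unifiers. Provability then transfers along `F`: a proof of `Bσ` in `Φ` yields a proof of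
`Bσ[t]` in `F(Φ)`, where `t` records the proof with the symbols `f_κ`, and dropping the last
argument of every atom of a proof in `F(Φ)` gives a proof in `Φ`. Since `y` is fresh for `A`,
an instance of `A` extends to an instance of `A[y]` sending `y` to `t`.
-/

theorem List.mem_foldr_union {α : Type*} [DecidableEq α] {x : α} {l : List (Finset α)} :
    x ∈ l.foldr (· ∪ ·) ∅ ↔ ∃ s ∈ l, x ∈ s := by
  induction l <;> simp [*]

theorem List.sizeOf_append {α : Type*} [SizeOf α] (l₁ l₂ : List α) :
    sizeOf (l₁ ++ l₂) + 1 = sizeOf l₁ + sizeOf l₂ := by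
  induction l₁ with
  | nil => simp; omega
  | cons a l₁ ih => simp only [List.cons_append, List.cons.sizeOf_spec]; omega

theorem List.sizeOf_zip_lt {α β : Type*} [SizeOf α] [SizeOf β] (l₁ : List α) (l₂ : List β) :
    sizeOf (l₁.zip l₂) < sizeOf l₁ + sizeOf l₂ := by
  induction l₁ generalizing l₂ with
  | nil => cases l₂ <;> simp
  | cons a l₁ ih =>
    cases l₂ with
    | nil => simp
    | cons b l₂ =>
      have := ih l₂
      simp only [List.zip_cons_cons, List.cons.sizeOf_spec, Prod.mk.sizeOf_spec]
      omega

theorem List.map_eq_map_iff_forall_zip {α β : Type*} {f : α → β} {l₁ l₂ : List α}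
    (h : l₁.length = l₂.length) : l₁.map f = l₂.map f ↔ ∀ p ∈ l₁.zip l₂, f p.1 = f p.2 := by
  rw [← List.forall₂_eq_eq_eq, List.forall₂_map_left_iff, List.forall₂_map_right_iff,
    List.forall₂_iff_zip]
  simp [h]

theorem Prod.lex_of_le_of_right {α β : Type*} [PartialOrder α] {r : β → β → Prop} {a a' : α}
    {b b' : β} (ha : a' ≤ a) (hb : r b' b) : Prod.Lex (· < ·) r (a', b') (a, b) := by
  rcases ha.lt_or_eq with ha | rfl
  · exact .left _ _ ha
  · exact .right _ hb

namespace Tm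

theorem inductionOn {P : Tm → Prop} (var : ∀ x, P (.var x))
    (fn : ∀ f ts, (∀ t ∈ ts, P t) → P (.fn f ts)) : ∀ t, P t
  | .var x => var x
  | .fn f ts => fn f ts fun t _ => inductionOn var fn t

@[simp] theorem subst_var_s10 (σ : Subst) (x : ℕ) : (Tm.var x).subst σ = σ x := by
  simp [Tm.subst]

@[simp] theorem subst_fn_s10 (σ : Subst) (f : ℕ) (ts : List Tm) :
    (Tm.fn f ts).subst σ = .fn f (ts.map (Tm.subst σ)) := by
  rw [Tm.subst, List.attach_map_val]

@[simp] theorem fv_var (x : ℕ) : (Tm.var x).fv = {x} := by simp [Tm.fv]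

theorem mem_fv_fn {v f : ℕ} {ts : List Tm} : v ∈ (Tm.fn f ts).fv ↔ ∃ t ∈ ts, v ∈ t.fv := by
  rw [Tm.fv, List.attach_map_val, List.mem_foldr_union]; simp

theorem subst_subst (θ γ : Subst) (t : Tm) : (t.subst γ).subst θ = t.subst (Subst.comp θ γ) := by
  induction t using Tm.inductionOn with
  | var x => simp [Subst.comp]
  | fn f ts ih => simpa using List.map_congr_left ih

theorem subst_congr {σ σ' : Subst} {t : Tm} (h : ∀ v ∈ t.fv, σ v = σ' v) :
    t.subst σ = t.subst σ' := by
  induction t using Tm.inductionOn with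
  | var x => simpa using h
  | fn f ts ih =>
    simpa using List.map_congr_left fun t ht => ih t ht fun v hv => h v (mem_fv_fn.2 ⟨t, ht, hv⟩)

theorem subst_id_s10 (t : Tm) : t.subst Subst.id = t := by
  induction t using Tm.inductionOn with
  | var x => simp [Subst.id]
  | fn f ts ih => simpa using List.map_congr_left ih

theorem mem_fv_subst {σ : Subst} {v : ℕ} {t : Tm} (h : v ∈ (t.subst σ).fv) :
    ∃ u ∈ t.fv, v ∈ (σ u).fv := by
  induction t using Tm.inductionOn with
  | var x => exact ⟨x, by simp, by simpa using h⟩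
  | fn f ts ih =>
    obtain ⟨-, ⟨t, ht, rfl⟩, hv⟩ := by simpa only [subst_fn_s10, mem_fv_fn, List.mem_map] using h
    obtain ⟨u, hu, hvu⟩ := ih t ht hv
    exact ⟨u, mem_fv_fn.2 ⟨t, ht, hu⟩, hvu⟩

theorem sizeOf_le_sizeOf_subst {σ : Subst} {x : ℕ} {t : Tm} (hx : x ∈ t.fv) :
    sizeOf (σ x) ≤ sizeOf (t.subst σ) := by
  induction t using Tm.inductionOn with
  | var y => simp_all
  | fn f ts ih =>
    obtain ⟨t, ht, hxt⟩ := mem_fv_fn.1 hx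
    have := List.sizeOf_lt_of_mem (List.mem_map_of_mem (f := Tm.subst σ) ht)
    have := ih t ht hxt
    simp only [subst_fn_s10, fn.sizeOf_spec]
    omega

theorem apply_ne_subst_of_mem_fv {σ : Subst} {x : ℕ} {t : Tm} (hx : x ∈ t.fv)
    (hne : t ≠ .var x) : σ x ≠ t.subst σ := by
  cases t with
  | var y => simp_all
  | fn f ts =>
    obtain ⟨u, hu, hxu⟩ := mem_fv_fn.1 hx
    have := List.sizeOf_lt_of_mem (List.mem_map_of_mem (f := Tm.subst σ) hu)
    have := sizeOf_le_sizeOf_subst (σ := σ) hxu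
    intro h
    rw [h, subst_fn_s10, fn.sizeOf_spec] at this
    omega

end Tm

theorem Subst.comp_assoc (θ γ σ : Subst) :
    Subst.comp (Subst.comp θ γ) σ = Subst.comp θ (Subst.comp γ σ) := by
  funext x; simp [Subst.comp, Tm.subst_subst]

@[simp] theorem Subst.comp_id (σ : Subst) : Subst.comp σ Subst.id = σ := by
  funext x; simp [Subst.comp, Subst.id]

section Unification

def Subst.single (x : ℕ) (t : Tm) : Subst := fun v => if v = x then t else .var v

def UnifiesEqs (δ : Subst) (E : List (Tm × Tm)) : Prop := ∀ p ∈ E, p.1.subst δ = p.2.subst δ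

def IsIdemMgu (γ : Subst) (E : List (Tm × Tm)) : Prop :=
  UnifiesEqs γ E ∧ ∀ δ, UnifiesEqs δ E → δ = Subst.comp δ γ

def substEqs (σ : Subst) (E : List (Tm × Tm)) : List (Tm × Tm) :=
  E.map fun p => (p.1.subst σ, p.2.subst σ)

def eqsFV (E : List (Tm × Tm)) : Finset ℕ := (E.map fun p => p.1.fv ∪ p.2.fv).foldr (· ∪ ·) ∅

variable {δ γ σ : Subst} {x f : ℕ} {s t : Tm} {ss ts : List Tm} {E E' : List (Tm × Tm)}

@[simp] theorem unifiesEqs_nil : UnifiesEqs δ [] := by simp [UnifiesEqs]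

@[simp] theorem unifiesEqs_cons {p : Tm × Tm} :
    UnifiesEqs δ (p :: E) ↔ p.1.subst δ = p.2.subst δ ∧ UnifiesEqs δ E :=
  List.forall_mem_cons

theorem unifiesEqs_append : UnifiesEqs δ (E ++ E') ↔ UnifiesEqs δ E ∧ UnifiesEqs δ E' :=
  List.forall_mem_append

theorem unifiesEqs_substEqs : UnifiesEqs δ (substEqs σ E) ↔ UnifiesEqs (Subst.comp δ σ) E := by
  simp only [UnifiesEqs, substEqs, List.forall_mem_map, Tm.subst_subst]

theorem unifiesEqs_fn_cons (h : ss.length = ts.length) :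
    UnifiesEqs δ ((.fn f ss, .fn f ts) :: E) ↔ UnifiesEqs δ (ss.zip ts ++ E) := by
  rw [unifiesEqs_cons, unifiesEqs_append]
  simp only [Tm.subst_fn_s10, Tm.fn.injEq, true_and, List.map_eq_map_iff_forall_zip h]
  rfl

theorem mem_eqsFV {v : ℕ} : v ∈ eqsFV E ↔ ∃ p ∈ E, v ∈ p.1.fv ∨ v ∈ p.2.fv := by
  simp [eqsFV, List.mem_foldr_union]

theorem IsIdemMgu.of_unifiesEqs_iff (h : IsIdemMgu γ E)
    (hE : ∀ δ, UnifiesEqs δ E ↔ UnifiesEqs δ E') : IsIdemMgu γ E' :=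
  ⟨(hE γ).1 h.1, fun δ hδ => h.2 δ ((hE δ).2 hδ)⟩

theorem isIdemMgu_nil : IsIdemMgu Subst.id [] :=
  ⟨unifiesEqs_nil, fun δ _ => (Subst.comp_id δ).symm⟩

theorem Tm.subst_single_of_not_mem_fv (hx : x ∉ s.fv) : s.subst (Subst.single x t) = s := by
  conv_rhs => rw [← Tm.subst_id_s10 s]
  exact Tm.subst_congr fun v hv => by simp [Subst.single, Subst.id, ne_of_mem_of_not_mem hv hx]

theorem Tm.fv_subst_single_subset : (s.subst (Subst.single x t)).fv ⊆ s.fv.erase x ∪ t.fv := by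
  intro v hv
  obtain ⟨u, hu, hvu⟩ := Tm.mem_fv_subst hv
  by_cases hux : u = x <;> simp_all [Subst.single]

theorem Subst.comp_single_of_apply_eq (h : δ x = t.subst δ) :
    Subst.comp δ (Subst.single x t) = δ := by
  funext v
  by_cases hv : v = x <;> simp [Subst.comp, Subst.single, hv, h]

theorem unifiesEqs_substEqs_single (hx : δ x = t.subst δ) (hE : UnifiesEqs δ E) :
    UnifiesEqs δ (substEqs (Subst.single x t) E) := by
  rwa [unifiesEqs_substEqs, Subst.comp_single_of_apply_eq hx]

theorem IsIdemMgu.cons_var (hx : x ∉ t.fv) (h : IsIdemMgu γ (substEqs (Subst.single x t) E)) :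
    IsIdemMgu (Subst.comp γ (Subst.single x t)) ((.var x, t) :: E) := by
  obtain ⟨hγ, hmax⟩ := h
  refine ⟨unifiesEqs_cons.2 ⟨?_, unifiesEqs_substEqs.1 hγ⟩, fun δ hδ => ?_⟩
  · simp [Subst.comp, Subst.single, ← Tm.subst_subst, Tm.subst_single_of_not_mem_fv hx]
  · obtain ⟨hx, hE⟩ := unifiesEqs_cons.1 hδ
    replace hx : δ x = t.subst δ := by simpa using hx
    calc δ = Subst.comp δ (Subst.single x t) := (Subst.comp_single_of_apply_eq hx).symm
      _ = Subst.comp (Subst.comp δ γ) (Subst.single x t) := by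
        rw [← hmax δ (unifiesEqs_substEqs_single hx hE)]
      _ = _ := Subst.comp_assoc _ _ _

theorem eqsFV_substEqs_single_subset (hx : x ∉ t.fv) :
    eqsFV (substEqs (Subst.single x t) E) ⊆ (eqsFV ((.var x, t) :: E)).erase x := by
  intro v hv
  obtain ⟨_, ⟨p, hp, rfl⟩, hv⟩ := by simpa only [substEqs, mem_eqsFV, List.mem_map] using hv
  have side : ∀ u : Tm, v ∈ (u.subst (Subst.single x t)).fv → v ≠ x ∧ (v ∈ u.fv ∨ v ∈ t.fv) := by
    intro u h
    rcases Finset.mem_union.1 (Tm.fv_subst_single_subset h) with h | h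
    · exact ⟨Finset.ne_of_mem_erase h, .inl (Finset.mem_of_mem_erase h)⟩
    · exact ⟨ne_of_mem_of_not_mem h hx, .inr h⟩
  rw [Finset.mem_erase, mem_eqsFV]
  rcases hv with h | h <;> obtain ⟨hne, h | h⟩ := side _ h
  · exact ⟨hne, p, .tail _ hp, .inl h⟩
  · exact ⟨hne, _, .head _, .inr h⟩
  · exact ⟨hne, p, .tail _ hp, .inr h⟩
  · exact ⟨hne, _, .head _, .inr h⟩

theorem card_eqsFV_substEqs_single_lt (hx : x ∉ t.fv) :
    (eqsFV (substEqs (Subst.single x t) E)).card < (eqsFV ((.var x, t) :: E)).card :=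
  (Finset.card_le_card (eqsFV_substEqs_single_subset hx)).trans_lt
    (Finset.card_erase_lt_of_mem (mem_eqsFV.2 ⟨_, .head _, .inl (by simp)⟩))

theorem eqsFV_subset_cons {p : Tm × Tm} : eqsFV E ⊆ eqsFV (p :: E) := by
  intro v
  simp only [mem_eqsFV, List.mem_cons]
  exact fun ⟨q, hq, hv⟩ => ⟨q, .inr hq, hv⟩

theorem eqsFV_cons_swap : eqsFV ((s, t) :: E) = eqsFV ((t, s) :: E) := by
  ext v
  simp only [mem_eqsFV, List.mem_cons, exists_eq_or_imp]
  rw [or_comm (a := v ∈ t.fv)]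

theorem eqsFV_zip_append_subset {g : ℕ} :
    eqsFV (ss.zip ts ++ E) ⊆ eqsFV ((.fn f ss, .fn g ts) :: E) := by
  intro v hv
  simp only [mem_eqsFV, List.mem_append, List.mem_cons] at hv ⊢
  obtain ⟨p, hp | hp, hv⟩ := hv
  · have ⟨h₁, h₂⟩ := List.of_mem_zip hp
    exact ⟨_, .inl rfl,
      hv.imp (fun h => Tm.mem_fv_fn.2 ⟨_, h₁, h⟩) (fun h => Tm.mem_fv_fn.2 ⟨_, h₂, h⟩)⟩
  · exact ⟨p, .inr hp, hv⟩

theorem sizeOf_zip_append_lt {g : ℕ} :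
    sizeOf (ss.zip ts ++ E) < sizeOf ((Tm.fn f ss, Tm.fn g ts) :: E) := by
  have := List.sizeOf_append (ss.zip ts) E
  have := List.sizeOf_zip_lt ss ts
  simp only [List.cons.sizeOf_spec, Prod.mk.sizeOf_spec, Tm.fn.sizeOf_spec]
  omega

theorem exists_isIdemMgu : ∀ (E : List (Tm × Tm)) {δ : Subst}, UnifiesEqs δ E → ∃ γ, IsIdemMgu γ E
  | [], _, _ => ⟨Subst.id, isIdemMgu_nil⟩
  | (.var x, t) :: E, δ, hδ => by
    obtain ⟨hx', hE⟩ := unifiesEqs_cons.1 hδ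
    by_cases hx : x ∈ t.fv
    · by_cases ht : t = .var x
      · subst ht
        obtain ⟨γ, hγ⟩ := exists_isIdemMgu E hE
        exact ⟨γ, hγ.of_unifiesEqs_iff fun δ => by simp⟩
      · exact absurd (by simpa using hx') (Tm.apply_ne_subst_of_mem_fv hx ht)
    · obtain ⟨γ, hγ⟩ := exists_isIdemMgu (substEqs (Subst.single x t) E)
        (unifiesEqs_substEqs_single (by simpa using hx') hE)
      exact ⟨_, hγ.cons_var hx⟩
  | (.fn f ss, .var x) :: E, δ, hδ => by
    obtain ⟨hx', hE⟩ := unifiesEqs_cons.1 hδ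
    have hx : x ∉ (Tm.fn f ss).fv := fun hx =>
      Tm.apply_ne_subst_of_mem_fv hx (by simp) (by simpa using hx'.symm)
    obtain ⟨γ, hγ⟩ := exists_isIdemMgu (substEqs (Subst.single x (.fn f ss)) E)
      (unifiesEqs_substEqs_single (by simpa using hx'.symm) hE)
    exact ⟨_, (hγ.cons_var hx).of_unifiesEqs_iff fun δ => by simp [eq_comm]⟩
  | (.fn f ss, .fn g ts) :: E, δ, hδ => by
    obtain ⟨⟨rfl, hst⟩, -⟩ := by simpa only [unifiesEqs_cons, Tm.subst_fn_s10, Tm.fn.injEq] using hδ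
    have hlen : ss.length = ts.length := by simpa using congrArg List.length hst
    obtain ⟨γ, hγ⟩ := exists_isIdemMgu (ss.zip ts ++ E) ((unifiesEqs_fn_cons hlen).1 hδ)
    exact ⟨γ, hγ.of_unifiesEqs_iff fun δ => (unifiesEqs_fn_cons hlen).symm⟩
termination_by E => ((eqsFV E).card, sizeOf E)
decreasing_by
  · exact Prod.lex_of_le_of_right (Finset.card_le_card eqsFV_subset_cons) (by simp)
  · exact .left _ _ (card_eqsFV_substEqs_single_lt hx)
  · exact .left _ _ (eqsFV_cons_swap ▸ card_eqsFV_substEqs_single_lt hx)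
  · exact Prod.lex_of_le_of_right (Finset.card_le_card eqsFV_zip_append_subset)
      sizeOf_zip_append_lt

end Unification

namespace Atom

variable {σ δ : Subst} {A B : Atom}

theorem subst_subst (θ γ : Subst) (A : Atom) :
    (A.subst γ).subst θ = A.subst (Subst.comp θ γ) := by
  simp [Atom.subst, Function.comp_def, Tm.subst_subst]

theorem mem_fv {v : ℕ} : v ∈ A.fv ↔ ∃ t ∈ A.args, v ∈ t.fv := by
  simp [Atom.fv, List.mem_foldr_union]

theorem subst_congr (h : ∀ v ∈ A.fv, σ v = δ v) : A.subst σ = A.subst δ := by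
  simp only [Atom.subst, Atom.mk.injEq, true_and]
  exact List.map_congr_left fun t ht => Tm.subst_congr fun v hv => h v (mem_fv.2 ⟨t, ht, hv⟩)

theorem mem_fv_subst {v : ℕ} (h : v ∈ (A.subst σ).fv) : ∃ u ∈ A.fv, v ∈ (σ u).fv := by
  obtain ⟨_, ⟨t, ht, rfl⟩, hv⟩ := by simpa only [mem_fv, Atom.subst, List.mem_map] using h
  obtain ⟨u, hu, hvu⟩ := Tm.mem_fv_subst hv
  exact ⟨u, mem_fv.2 ⟨t, ht, hu⟩, hvu⟩

theorem ext_subst (A : Atom) (t : Tm) (σ : Subst) :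
    (A.ext t).subst σ = (A.subst σ).ext (t.subst σ) := by
  simp [Atom.ext, Atom.subst]

def dropLast (A : Atom) : Atom := ⟨A.pred, A.args.dropLast⟩

@[simp] theorem dropLast_ext (A : Atom) (t : Tm) : (A.ext t).dropLast = A := by
  simp [Atom.ext, Atom.dropLast]

theorem unifies_iff_unifiesEqs (hpred : A.pred = B.pred) (hlen : A.args.length = B.args.length) :
    Unifies δ A B ↔ UnifiesEqs δ (A.args.zip B.args) := by
  simp only [Unifies, Atom.subst, Atom.mk.injEq, hpred, true_and,
    List.map_eq_map_iff_forall_zip hlen]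
  rfl

theorem exists_isMGU_of_unifies (h : Unifies δ A B) :
    ∃ γ, IsMGU γ A B ∧ δ = Subst.comp δ γ := by
  obtain ⟨hpred, hargs⟩ := Atom.mk.inj h
  have hlen : A.args.length = B.args.length := by simpa using congrArg List.length hargs
  have hiff := fun δ => unifies_iff_unifiesEqs (δ := δ) hpred hlen
  obtain ⟨γ, hγ, hmax⟩ := exists_isIdemMgu _ ((hiff δ).1 h)
  exact ⟨γ, ⟨(hiff γ).2 hγ, fun δ' h' => ⟨δ', hmax δ' ((hiff δ').1 h')⟩⟩, hmax δ ((hiff δ).1 h)⟩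

end Atom

theorem mem_listFV {v : ℕ} {l : List Atom} : v ∈ listFV l ↔ ∃ a ∈ l, v ∈ a.fv := by
  simp [listFV, List.mem_foldr_union]

theorem mem_mFV {v : ℕ} {G : Multiset Atom} : v ∈ mFV G ↔ ∃ a ∈ G, v ∈ a.fv := by
  induction G using Multiset.induction with
  | empty => simp [mFV]
  | cons a G ih => simp only [mFV] at ih; simp [mFV, ih]

inductive Provable (Ψ : Prog) : Atom → Prop where
  | intro {κ : ℕ} {body : List Atom} {head : Atom} (σ : Subst) :
      (κ, body, head) ∈ Ψ → (∀ b ∈ body, Provable Ψ (b.subst σ)) → Provable Ψ (head.subst σ)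

section Resolution

variable {Φ : Prog} {κ : ℕ} {γ δ : Subst} {G G' : Multiset Atom}

theorem Provable.of_unifStepL (h : UnifStepL Φ κ γ G G') (h' : ∀ a ∈ G', Provable Φ (a.subst δ)) :
    ∀ a ∈ G, Provable Φ (a.subst (Subst.comp δ γ)) := by
  obtain ⟨A, rest, _, _, rfl, ⟨body, head, ρ, hmem, -, rfl, rfl, -⟩, ⟨hunif, -⟩, rfl⟩ := h
  simp only [Multiset.mem_add, Multiset.mem_coe, List.map_map, List.mem_map, Multiset.mem_map,
    Function.comp_apply] at h'
  intro a ha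
  rcases Multiset.mem_cons.1 ha with rfl | ha
  · rw [← Atom.subst_subst, ← hunif, Atom.rename, Atom.subst_subst, Atom.subst_subst]
    refine .intro _ hmem fun b hb => ?_
    simpa only [Atom.rename, Atom.subst_subst, Subst.comp_assoc] using h' _ (.inl ⟨b, hb, rfl⟩)
  · simpa only [Atom.subst_subst] using h' _ (.inr ⟨a, ha, rfl⟩)

theorem exists_provable_of_unifR {p q : Multiset Atom × Subst}
    (h : Relation.ReflTransGen (unifR Φ) p q) (hq : q.1 = 0) :
    ∃ δ, ∀ a ∈ p.1, Provable Φ (a.subst δ) := by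
  induction h using Relation.ReflTransGen.head_induction_on with
  | refl => exact ⟨Subst.id, by simp [hq]⟩
  | head hstep _ ih =>
    obtain ⟨κ, γ, hstep, -⟩ := hstep
    obtain ⟨δ, hδ⟩ := ih
    exact ⟨_, Provable.of_unifStepL hstep hδ⟩

theorem Provable.tmred_cons {a : Atom} (h : Provable Φ a) {rest : Multiset Atom}
    (hrest : Relation.ReflTransGen (TMred Φ) rest 0) :
    Relation.ReflTransGen (TMred Φ) (a ::ₘ rest) 0 := by
  induction h generalizing rest with
  | @intro κ body head σ hmem _ ih =>
    suffices ∀ l ⊆ body, Relation.ReflTransGen (TMred Φ) (↑(l.map (Atom.subst σ)) + rest) 0 from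
      .head ⟨κ, body, head, σ, rest, hmem, rfl, rfl⟩ (this body (List.Subset.refl _))
    intro l hl
    induction l with
    | nil => simpa using hrest
    | cons b l ihl =>
      rw [List.map_cons, ← Multiset.cons_coe, Multiset.cons_add]
      exact ih b (hl (.head _)) (ihl fun c hc => hl (.tail _ hc))

def Subst.glue (M : ℕ) (δ σ : Subst) : Subst := fun v => if v < M then δ v else σ (v - M)

theorem Atom.subst_glue_of_fv_lt {M : ℕ} {σ : Subst} {A : Atom} (h : ∀ v ∈ A.fv, v < M) :
    A.subst (Subst.glue M δ σ) = A.subst δ :=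
  Atom.subst_congr fun v hv => if_pos (h v hv)

theorem Atom.subst_glue_rename_add (M : ℕ) (σ : Subst) (A : Atom) :
    (A.rename (· + M)).subst (Subst.glue M δ σ) = A.subst σ := by
  rw [Atom.rename, Atom.subst_subst]
  congr 1
  funext v
  simp [Subst.comp, Subst.glue]

theorem Atom.le_of_mem_fv_rename_add {M v : ℕ} {A : Atom} (h : v ∈ (A.rename (· + M)).fv) :
    M ≤ v := by
  obtain ⟨u, -, hu⟩ := Atom.mem_fv_subst h
  simp only [Tm.fv_var, Finset.mem_singleton] at hu
  omega

theorem freshRuleFor_rename_add {body : List Atom} {head : Atom} {M : ℕ}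
    (hmem : (κ, body, head) ∈ Φ) (hM : ∀ v ∈ mFV G, v < M) :
    FreshRuleFor Φ κ G (body.map (Atom.rename (· + M))) (head.rename (· + M)) := by
  refine ⟨body, head, (· + M), hmem, add_left_injective M, rfl, rfl,
    Finset.disjoint_left.2 fun v hv hvG => absurd (hM v hvG) (not_lt.2 ?_)⟩
  rcases Finset.mem_union.1 hv with hv | hv
  · obtain ⟨_, ⟨a, -, rfl⟩, hva⟩ := by simpa only [mem_listFV, List.mem_map] using hv
    exact Atom.le_of_mem_fv_rename_add hva
  · exact Atom.le_of_mem_fv_rename_add hv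

/-- Lifting: rename the axiom apart from `G` by shifting its variables above those of `G`;
the instance `δ` of `G` and the matcher `σ` of the axiom then glue to a unifier, which factors
through the most general one. -/
theorem exists_unifStepL_of_tmStep {S' : Multiset Atom} (h : TMStep Φ κ (G.map (Atom.subst δ)) S') :
    ∃ γ G' δ', UnifStepL Φ κ γ G G' ∧ G'.map (Atom.subst δ') = S' := by
  classical
  obtain ⟨body, head, σ, rest, hmem, hG, rfl⟩ := h
  obtain ⟨A, hAG, hA, hrest⟩ := (Multiset.map_eq_cons _ G _ _).2 hG
  obtain ⟨M, hM⟩ := Finset.exists_nat_subset_range (mFV G)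
  have hM : ∀ v ∈ mFV G, v < M := fun v hv => Finset.mem_range.1 (hM hv)
  have hagree : ∀ B ∈ G, B.subst (Subst.glue M δ σ) = B.subst δ := fun B hB =>
    Atom.subst_glue_of_fv_lt fun v hv => hM v (mem_mFV.2 ⟨B, hB, hv⟩)
  have hunif : Unifies (Subst.glue M δ σ) (head.rename (· + M)) A := by
    rw [Unifies, Atom.subst_glue_rename_add, hagree A hAG, hA]
  obtain ⟨γ, hmgu, hfac⟩ := Atom.exists_isMGU_of_unifies hunif
  refine ⟨γ, _, Subst.glue M δ σ, ⟨A, G.erase A, _, _, (Multiset.cons_erase hAG).symm,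
    freshRuleFor_rename_add hmem hM, hmgu, rfl⟩, ?_⟩
  rw [Multiset.map_add, Multiset.map_coe, Multiset.map_map, List.map_map, List.map_map, ← hrest]
  have hγ : ∀ B : Atom, (B.subst γ).subst (Subst.glue M δ σ) = B.subst (Subst.glue M δ σ) := by
    intro B; rw [Atom.subst_subst, ← hfac]
  congr 1
  · simp [Function.comp_def, hγ, Atom.subst_glue_rename_add]
  · exact Multiset.map_congr rfl fun B hB => by
      rw [Function.comp_apply, hγ, hagree B (Multiset.mem_of_mem_erase hB)]

theorem exists_unifR_of_tmred {S : Multiset Atom} (h : Relation.ReflTransGen (TMred Φ) S 0) :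
    ∀ G δ, G.map (Atom.subst δ) = S → ∀ s, ∃ γ, Relation.ReflTransGen (unifR Φ) (G, s) (0, γ) := by
  induction h using Relation.ReflTransGen.head_induction_on with
  | refl =>
    intro G δ hG s
    rw [Multiset.map_eq_zero.1 hG]
    exact ⟨s, .refl⟩
  | head hstep _ ih =>
    intro G δ hG s
    obtain ⟨κ, hstep⟩ := hstep
    obtain ⟨γ, G', δ', hunif, hG'⟩ := exists_unifStepL_of_tmStep (hG ▸ hstep)
    obtain ⟨γ', hγ'⟩ := ih G' δ' hG' (Subst.comp γ s)
    exact ⟨γ', .head ⟨κ, γ, hunif, rfl⟩ hγ'⟩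

end Resolution

theorem unifSucc_singleton_iff {Ψ : Prog} {B : Atom} :
    UnifSucc Ψ {B} ↔ ∃ δ, Provable Ψ (B.subst δ) := by
  constructor
  · rintro ⟨γ, h⟩
    obtain ⟨δ, hδ⟩ := exists_provable_of_unifR h rfl
    exact ⟨δ, hδ B (Multiset.mem_singleton_self B)⟩
  · rintro ⟨δ, h⟩
    exact exists_unifR_of_tmred (h.tmred_cons .refl) {B} δ (by simp) Subst.id

section Realizability

variable {fsym : ℕ → ℕ} {Φ : Prog} {κ : ℕ} {body : List Atom} {head : Atom}

theorem mem_transProg (h : (κ, body, head) ∈ Φ) :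
    (κ, transRule fsym κ body head) ∈ transProg fsym Φ :=
  List.mem_map_of_mem (f := fun r => (r.1, transRule fsym r.1 r.2.1 r.2.2)) h

theorem transRule_subst {σ σ' : Subst} {us : List Tm} (hus : us.length = body.length)
    (hlow : ∀ v ∈ ruleFV body head, σ' v = σ v)
    (hhigh : ∀ i (hi : i < us.length), σ' ((ruleFV body head).sup id + 1 + i) = us[i]) :
    (transRule fsym κ body head).1.map (Atom.subst σ') =
        List.zipWith (fun b u => (b.subst σ).ext u) body us ∧
      (transRule fsym κ body head).2.subst σ' = (head.subst σ).ext (.fn (fsym κ) us) := by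
  have hbody : ∀ b ∈ body, b.subst σ' = b.subst σ := fun b hb => Atom.subst_congr fun v hv =>
    hlow v (Finset.mem_union_left _ (mem_listFV.2 ⟨b, hb, hv⟩))
  have hhead : head.subst σ' = head.subst σ :=
    Atom.subst_congr fun v hv => hlow v (Finset.mem_union_right _ hv)
  constructor
  · refine List.ext_getElem (by simp [transRule, extBody, hus]) fun i h₁ h₂ => ?_
    simp only [transRule, extBody, List.getElem_map, List.getElem_zipWith, List.getElem_range,
      Atom.ext_subst, Tm.subst_var_s10, hbody _ (List.getElem_mem _)]
    rw [hhigh i (by simp_all)]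
  · refine (Atom.ext_subst _ _ _).trans ?_
    rw [hhead]
    simp only [Tm.subst_fn_s10, List.map_map]
    congr 2
    refine List.ext_getElem (by simp [hus]) fun i h₁ h₂ => ?_
    simp [hhigh i h₂]

theorem Provable.exists_ext_transProg {B : Atom} (h : Provable Φ B) :
    ∃ t, Provable (transProg fsym Φ) (B.ext t) := by
  induction h with
  | @intro κ body head σ hmem _ ih =>
    have : Nonempty Tm := ⟨.var 0⟩
    choose! t ht using ih
    set σ' := Subst.glue ((ruleFV body head).sup id + 1) σ fun i => (body.map t).getD i (.var 0)
    obtain ⟨hbody, hhead⟩ := transRule_subst (fsym := fsym) (κ := κ) (σ := σ) (σ' := σ')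
      (us := body.map t) (by simp)
      (fun v hv => if_pos (Nat.lt_succ_of_le (Finset.le_sup (f := id) hv)))
      (fun i hi => by
        dsimp only [σ', Subst.glue]
        rw [if_neg (by omega), Nat.add_sub_cancel_left, List.getD_eq_getElem _ _ hi])
    refine ⟨_, hhead ▸ Provable.intro _ (mem_transProg hmem) fun b' hb' => ?_⟩
    have := List.mem_map_of_mem (f := Atom.subst σ')
      (show b' ∈ (transRule fsym κ body head).1 from hb')
    rw [hbody, List.zipWith_map_right, List.zipWith_self, List.mem_map] at this
    obtain ⟨b, hb, heq⟩ := this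
    exact heq ▸ ht b hb

theorem Provable.dropLast_of_transProg {B : Atom} (h : Provable (transProg fsym Φ) B) :
    Provable Φ B.dropLast := by
  induction h with
  | @intro κ' body' head' σ hmemT _ ih =>
    obtain ⟨⟨κ, body, head⟩, hmem, heq⟩ := List.mem_map.1 hmemT
    obtain ⟨-, hrule⟩ := Prod.mk.inj heq
    set us := (List.range body.length).map fun i => σ ((ruleFV body head).sup id + 1 + i)
    obtain ⟨hbody, hhead⟩ := transRule_subst (fsym := fsym) (κ := κ) (body := body) (head := head)
      (σ := σ) (σ' := σ) (us := us) (by simp [us]) (fun _ _ => rfl) (fun i hi => by simp [us])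
    simp only [hrule] at hbody hhead
    rw [hhead, Atom.dropLast_ext]
    refine .intro σ hmem fun b hb => ?_
    obtain ⟨i, hi, rfl⟩ := List.getElem_of_mem hb
    have hius : i < us.length := by simpa [us] using hi
    have : (body[i].subst σ).ext us[i] ∈ List.zipWith (fun b u => (b.subst σ).ext u) body us :=
      List.mem_iff_getElem.2 ⟨i, by simp [hi, hius], by simp⟩
    rw [← hbody] at this
    obtain ⟨b', hb', heq⟩ := List.mem_map.1 this
    simpa [heq] using ih b' hb'

end Realizability

theorem realizability_preserves_unif_general (fsym : ℕ → ℕ) (Φ : Prog)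
    (A : Atom) (y : ℕ) (hy : y ∉ A.fv) :
    UnifSucc Φ {A} ↔ UnifSucc (transProg fsym Φ) {A.ext (Tm.var y)} := by
  rw [unifSucc_singleton_iff, unifSucc_singleton_iff]
  constructor
  · rintro ⟨δ, h⟩
    obtain ⟨t, ht⟩ := h.exists_ext_transProg (fsym := fsym)
    refine ⟨Function.update δ y t, ?_⟩
    rwa [Atom.ext_subst, Tm.subst_var_s10, Function.update_self,
      Atom.subst_congr fun v hv => Function.update_of_ne (ne_of_mem_of_not_mem hv hy) _ _]
  · rintro ⟨δ, h⟩
    exact ⟨δ, by simpa [Atom.ext_subst] using h.dropLast_of_transProg⟩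

/-- Realizability preserves LP-Unif success for queries: for a fresh
variable `y`, `Φ ⊢ {A} ⇝* ∅` iff `F(Φ) ⊢ {A[y]} ⇝* ∅`. -/
theorem realizability_preserves_unif (fsym : ℕ → ℕ) (Φ : Prog)
    (hf : FreshSyms fsym Φ) (A : Atom) (y : ℕ) (hy : y ∉ A.fv) :
    UnifSucc Φ {A} ↔ UnifSucc (transProg fsym Φ) {A.ext (Tm.var y)} :=
  realizability_preserves_unif_general fsym Φ A y hy

end SRes
end
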